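/- In the real vector space of antisymmetric maps β : Fin 7 → Fin 7 → ℝ (dimension 21), the subspace Ω²₇ = {β : β_{ab} = ∑_k X_k φ_{kab} for some X ∈ ℝ⁷} has dimension 7, the subspace Ω²₁₄ = {β : ∑_{i,j} β_{ij} φ_{ijk} = 0 for all k} has dimension 14, and the whole space is the (internal) direct sum Ω²₇ ⊕ Ω²₁₄. -/

import Mathlib

open scoped BigOperators

/-- Antisymmetrized elementary tensor on `ℝ⁷`: value `sign σ` at `v ∘ σ`, zero elsewhere. -/
noncomputable def altE {n : ℕ} (v w : Fin n → Fin 7) : ℝ :=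
  ∑ σ : Equiv.Perm (Fin n), ((Equiv.Perm.sign σ : ℤ) : ℝ) * (if w = v ∘ σ then 1 else 0)

/-- The G₂ 3-form `φ = e^{123}+e^{145}−e^{167}+e^{246}+e^{257}+e^{347}−e^{356}` (0-indexed). -/
noncomputable def phi (i j k : Fin 7) : ℝ :=
  altE ![0,1,2] ![i,j,k] + altE ![0,3,4] ![i,j,k] - altE ![0,5,6] ![i,j,k]
    + altE ![1,3,5] ![i,j,k] + altE ![1,4,6] ![i,j,k] + altE ![2,3,6] ![i,j,k]
    - altE ![2,4,5] ![i,j,k]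

/-- The dual 4-form `ψ = ∗φ = −e^{4567}−e^{2367}+e^{2345}−e^{1357}−e^{1346}−e^{1256}+e^{1247}`
(0-indexed). -/
noncomputable def psi (i j k l : Fin 7) : ℝ :=
  - altE ![3,4,5,6] ![i,j,k,l] - altE ![1,2,5,6] ![i,j,k,l] + altE ![1,2,3,4] ![i,j,k,l]
    - altE ![0,2,4,6] ![i,j,k,l] - altE ![0,2,3,5] ![i,j,k,l] - altE ![0,1,4,5] ![i,j,k,l]
    + altE ![0,1,3,6] ![i,j,k,l]

/-- Kronecker delta on `Fin 7`. -/
noncomputable def kdelta (i j : Fin 7) : ℝ := if i = j then 1 else 0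

/-- The space of antisymmetric 2-tensors on `ℝ⁷`. -/
def Alt2 : Submodule ℝ (Fin 7 → Fin 7 → ℝ) where
  carrier := {β | ∀ i j, β i j = - β j i}
  zero_mem' := by intro i j; simp
  add_mem' := by
    intro a b ha hb i j
    simp only [Pi.add_apply]
    rw [ha i j, hb i j]; ring
  smul_mem' := by
    intro c a ha i j
    simp only [Pi.smul_apply, smul_eq_mul]
    rw [ha i j]; ring

/-- The subspace `Ω²₇` of 2-tensors of the form `X ⌟ φ`. -/
noncomputable def Omega2_7 : Submodule ℝ (Fin 7 → Fin 7 → ℝ) where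
  carrier := {β | ∃ X : Fin 7 → ℝ, ∀ a b, β a b = ∑ k, X k * phi k a b}
  zero_mem' := ⟨0, by simp⟩
  add_mem' := by
    rintro a b ⟨X, hX⟩ ⟨Y, hY⟩
    refine ⟨fun k => X k + Y k, fun i j => ?_⟩
    simp only [Pi.add_apply, hX i j, hY i j, add_mul, Finset.sum_add_distrib]
  smul_mem' := by
    rintro c a ⟨X, hX⟩
    refine ⟨fun k => c * X k, fun i j => ?_⟩
    simp only [Pi.smul_apply, smul_eq_mul, hX i j, Finset.mul_sum, mul_assoc]

/-- The subspace `Ω²₁₄` of antisymmetric 2-tensors with `∑ β_{ij} φ_{ijk} = 0` for all `k`. -/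
noncomputable def Omega2_14 : Submodule ℝ (Fin 7 → Fin 7 → ℝ) where
  carrier := {β | (∀ i j, β i j = - β j i) ∧ ∀ k, ∑ i, ∑ j, β i j * phi i j k = 0}
  zero_mem' := ⟨by intro i j; simp, by intro k; simp⟩
  add_mem' := by
    rintro a b ⟨ha1, ha2⟩ ⟨hb1, hb2⟩
    refine ⟨fun i j => ?_, fun k => ?_⟩
    · simp only [Pi.add_apply]; rw [ha1 i j, hb1 i j]; ring
    · simp only [Pi.add_apply, add_mul, Finset.sum_add_distrib, ha2 k, hb2 k, add_zero]
  smul_mem' := by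
    rintro c a ⟨ha1, ha2⟩
    refine ⟨fun i j => ?_, fun k => ?_⟩
    · simp only [Pi.smul_apply, smul_eq_mul]; rw [ha1 i j]; ring
    · simp only [Pi.smul_apply, smul_eq_mul, mul_assoc, ← Finset.mul_sum, ha2 k, mul_zero]

/-! The 2-forms `φ_k = e_k ⌟ φ` satisfy `∑ φ_{kij} φ_{ijl} = 6 δ_{kl}`, i.e. the map
`π : β ↦ (∑ β_{ij} φ_{ijk})_k` is, up to the factor `6`, a left inverse of `T : X ↦ X ⌟ φ`.
Hence `T` is injective and `range T = Ω²₇` is complementary to `ker π`. Since `Ω²₇` consists of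
antisymmetric tensors, the modular law splits the antisymmetric tensors as `Ω²₇ ⊕ (Alt2 ⊓ ker π)`,
and the second summand is `Ω²₁₄`, of dimension `21 - 7 = 14`. -/

open Module LinearMap

def antisymmetric (K ι : Type*) [Ring K] : Submodule K (ι → ι → K) where
  carrier := {β | ∀ i j, β i j = - β j i}
  zero_mem' := by simp
  add_mem' := by
    intro a b ha hb i j
    simp only [Pi.add_apply, ha i j, hb i j, neg_add]
  smul_mem' := by
    intro c a ha i j
    simp only [Pi.smul_apply, smul_eq_mul, ha i j, mul_neg]

lemma antisymmetric_eq_zero_of_upper_eq_zero {K ι : Type*} [Ring K] [IsAddTorsionFree K]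
    [LinearOrder ι] {β : ι → ι → K} (hβ : β ∈ antisymmetric K ι)
    (h : ∀ i j, i < j → β i j = 0) : β = 0 := by
  ext i j
  rcases lt_trichotomy i j with hij | rfl | hij
  · exact h i j hij
  · exact self_eq_neg.mp (hβ i i)
  · rw [hβ, h j i hij, neg_zero, Pi.zero_apply, Pi.zero_apply]

def antisymmetricToUpper (K ι : Type*) [Ring K] [LinearOrder ι] :
    antisymmetric K ι →ₗ[K] ({p : ι × ι // p.1 < p.2} → K) where
  toFun β p := β.1 p.1.1 p.1.2
  map_add' _ _ := rfl
  map_smul' _ _ := rfl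

lemma antisymmetricToUpper_bijective (K ι : Type*) [Ring K] [IsAddTorsionFree K]
    [LinearOrder ι] : Function.Bijective (antisymmetricToUpper K ι) := by
  refine ⟨(injective_iff_map_eq_zero _).2 fun β hβ => ?_, fun f => ?_⟩
  · refine Subtype.ext (antisymmetric_eq_zero_of_upper_eq_zero β.2 fun i j hij => ?_)
    exact congrFun hβ ⟨(i, j), hij⟩
  · let g : ι → ι → K := fun i j => if h : i < j then f ⟨(i, j), h⟩ else 0
    refine ⟨⟨fun i j => g i j - g j i, fun i j => by simp only [neg_sub]⟩, funext fun p => ?_⟩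
    simp [antisymmetricToUpper, g, p.2, not_lt_of_gt p.2]

theorem finrank_antisymmetric (K ι : Type*) [Field K] [CharZero K] [Fintype ι] [LinearOrder ι] :
    finrank K (antisymmetric K ι) = (Fintype.card ι).choose 2 := by
  rw [(LinearEquiv.ofBijective _ (antisymmetricToUpper_bijective K ι)).finrank_eq,
    finrank_fintype_fun_eq_card, Fintype.card_subtype, Fintype.card_product_filter_lt]

def contractLast {ι R : Type*} [Fintype ι] [CommSemiring R] (φ : ι → ι → ι → R) :
    (ι → ι → R) →ₗ[R] ι → R where
  toFun β k := ∑ i, ∑ j, β i j * φ i j k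
  map_add' β γ := by
    ext k
    simp only [Pi.add_apply, add_mul, Finset.sum_add_distrib]
  map_smul' c β := by
    ext k
    simp only [Pi.smul_apply, smul_eq_mul, mul_assoc, Finset.mul_sum, RingHom.id_apply]

lemma contractLast_comp_linearCombination {ι R : Type*} [Fintype ι] [DecidableEq ι]
    [CommSemiring R] (φ : ι → ι → ι → R) {c : R}
    (hφ : ∀ k l, ∑ i, ∑ j, φ k i j * φ i j l = if k = l then c else 0) :
    contractLast φ ∘ₗ Fintype.linearCombination R φ = c • LinearMap.id := by
  ext k l
  simp [contractLast, Fintype.linearCombination_apply_single, hφ, Pi.single_apply, eq_comm]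

section LeftInverse

variable {K V M : Type*} [Field K] [AddCommGroup V] [Module K V] [AddCommGroup M] [Module K M]
  {T : V →ₗ[K] M} {P : M →ₗ[K] V} {c : K}

lemma injective_of_comp_eq_smul (hc : c ≠ 0) (h : P ∘ₗ T = c • LinearMap.id) :
    Function.Injective T := by
  intro v w hvw
  have hPT (v : V) : P (T v) = c • v := LinearMap.congr_fun h v
  rw [← smul_right_inj hc, ← hPT, ← hPT, hvw]

lemma isCompl_range_ker_of_comp_eq_smul (hc : c ≠ 0) (h : P ∘ₗ T = c • LinearMap.id) :
    IsCompl (range T) (ker P) := by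
  have hPT (v : V) : P (T v) = c • v := LinearMap.congr_fun h v
  constructor
  · rw [disjoint_iff_inf_le]
    rintro _ ⟨⟨v, rfl⟩, hv⟩
    rw [SetLike.mem_coe, mem_ker, hPT, smul_eq_zero] at hv
    simp [hv.resolve_left hc]
  · rw [codisjoint_iff_le_sup]
    intro x _
    refine Submodule.mem_sup.2 ⟨T (c⁻¹ • P x), mem_range_self _ _, x - T (c⁻¹ • P x), ?_,
      add_sub_cancel _ _⟩
    simp [hPT, smul_smul, hc]

end LeftInverse

lemma altE_comp_perm {n : ℕ} (v w : Fin n → Fin 7) (τ : Equiv.Perm (Fin n)) :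
    altE v (w ∘ τ) = (Equiv.Perm.sign τ : ℤ) * altE v w := by
  unfold altE
  rw [Finset.mul_sum, ← Equiv.sum_comp (Equiv.mulRight τ)]
  refine Finset.sum_congr rfl fun σ _ => ?_
  have : w ∘ τ = v ∘ ⇑(σ * τ) ↔ w = v ∘ σ := by
    rw [Equiv.Perm.coe_mul, ← Function.comp_assoc]
    exact τ.surjective.injective_comp_right.eq_iff
  simp only [Equiv.coe_mulRight, Equiv.Perm.sign_mul, this]
  push_cast
  ring

lemma phi_swap (i j k : Fin 7) : phi i k j = - phi i j k := by
  have h : ![i, k, j] = ![i, j, k] ∘ Equiv.swap 1 2 := by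
    ext x
    fin_cases x <;> rfl
  simp only [phi, h, altE_comp_perm, Equiv.Perm.sign_swap (by decide : (1 : Fin 3) ≠ 2)]
  push_cast
  ring

def altEInt {n : ℕ} (v w : Fin n → Fin 7) : ℤ :=
  ∑ σ : Equiv.Perm (Fin n), (Equiv.Perm.sign σ : ℤ) * if w = v ∘ σ then 1 else 0

lemma altE_eq_altEInt {n : ℕ} (v w : Fin n → Fin 7) : altE v w = altEInt v w := by
  simp only [altE, altEInt, Int.cast_sum, Int.cast_mul, apply_ite Int.cast, Int.cast_one,
    Int.cast_zero]

def phiInt (i j k : Fin 7) : ℤ :=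
  altEInt ![0,1,2] ![i,j,k] + altEInt ![0,3,4] ![i,j,k] - altEInt ![0,5,6] ![i,j,k]
    + altEInt ![1,3,5] ![i,j,k] + altEInt ![1,4,6] ![i,j,k] + altEInt ![2,3,6] ![i,j,k]
    - altEInt ![2,4,5] ![i,j,k]

def signedTriple (a b c i j k : Fin 7) : ℤ :=
  if (i, j, k) = (a, b, c) ∨ (i, j, k) = (b, c, a) ∨ (i, j, k) = (c, a, b) then 1
  else if (i, j, k) = (a, c, b) ∨ (i, j, k) = (b, a, c) ∨ (i, j, k) = (c, b, a) then -1
  else 0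

/-- The value table of `φ`, cheap enough for `decide` to sum over, unlike `phiInt`, whose every
entry enumerates permutations. -/
def phiTable (i j k : Fin 7) : ℤ :=
  signedTriple 0 1 2 i j k + signedTriple 0 3 4 i j k - signedTriple 0 5 6 i j k
    + signedTriple 1 3 5 i j k + signedTriple 1 4 6 i j k + signedTriple 2 3 6 i j k
    - signedTriple 2 4 5 i j k

lemma phiInt_eq_phiTable : ∀ i j k, phiInt i j k = phiTable i j k := by decide

lemma sum_phiTable_mul_phiTable :
    ∀ k l, ∑ i, ∑ j, phiTable k i j * phiTable i j l = if k = l then 6 else 0 := by decide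

lemma phi_eq_phiTable (i j k : Fin 7) : phi i j k = phiTable i j k := by
  rw [← phiInt_eq_phiTable]
  simp only [phi, phiInt, altE_eq_altEInt]
  push_cast
  ring

lemma sum_phi_mul_phi (k l : Fin 7) :
    ∑ i, ∑ j, phi k i j * phi i j l = if k = l then 6 else 0 := by
  simp only [phi_eq_phiTable]
  exact_mod_cast sum_phiTable_mul_phiTable k l

lemma Alt2_eq_antisymmetric : Alt2 = antisymmetric ℝ (Fin 7) := rfl

lemma Omega2_7_eq_range : Omega2_7 = range (Fintype.linearCombination ℝ phi) := by
  ext β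
  simp only [Omega2_7, Submodule.mem_mk, AddSubmonoid.mem_mk, AddSubsemigroup.mem_mk,
    Set.mem_ofPred_eq, mem_range, Fintype.linearCombination_apply, funext_iff, Finset.sum_apply,
    Pi.smul_apply, smul_eq_mul, eq_comm]

lemma range_linearCombination_phi_le_Alt2 : range (Fintype.linearCombination ℝ phi) ≤ Alt2 := by
  rintro _ ⟨X, rfl⟩ a b
  simp only [Fintype.linearCombination_apply, Finset.sum_apply, Pi.smul_apply, smul_eq_mul,
    ← Finset.sum_neg_distrib, phi_swap _ b a, mul_neg]

lemma Omega2_14_eq_inf_ker : Omega2_14 = Alt2 ⊓ ker (contractLast phi) := by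
  ext β
  exact and_congr Iff.rfl funext_iff.symm

/-- The G₂-decomposition of 2-forms on `ℝ⁷`: in the 21-dimensional space of antisymmetric
2-tensors, `Ω²₇` has dimension 7, `Ω²₁₄` has dimension 14, and the whole space is their
internal direct sum. -/
theorem two_forms_dimension_decomposition :
    Module.finrank ℝ Alt2 = 21 ∧
    Module.finrank ℝ Omega2_7 = 7 ∧
    Module.finrank ℝ Omega2_14 = 14 ∧
    Omega2_7 ⊔ Omega2_14 = Alt2 ∧
    Omega2_7 ⊓ Omega2_14 = ⊥ := by
  have hPT := contractLast_comp_linearCombination phi sum_phi_mul_phi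
  have hcompl := isCompl_range_ker_of_comp_eq_smul (by norm_num) hPT
  have h21 : finrank ℝ Alt2 = 21 := by
    rw [Alt2_eq_antisymmetric, finrank_antisymmetric]
    rfl
  have h7 : finrank ℝ Omega2_7 = 7 := by
    rw [Omega2_7_eq_range, finrank_range_of_inj (injective_of_comp_eq_smul (by norm_num) hPT),
      finrank_fin_fun]
  have hsup : Omega2_7 ⊔ Omega2_14 = Alt2 := by
    rw [Omega2_7_eq_range, Omega2_14_eq_inf_ker, inf_comm,
      ← sup_inf_assoc_of_le _ range_linearCombination_phi_le_Alt2, hcompl.sup_eq_top, top_inf_eq]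
  have hinf : Omega2_7 ⊓ Omega2_14 = ⊥ := by
    rw [Omega2_7_eq_range, Omega2_14_eq_inf_ker, eq_bot_iff, ← hcompl.inf_eq_bot]
    exact inf_le_inf_left _ inf_le_right
  have hdim := Submodule.finrank_sup_add_finrank_inf_eq Omega2_7 Omega2_14
  rw [hsup, hinf, finrank_bot, h21, h7] at hdim
  exact ⟨h21, h7, by omega, hsup, hinf⟩
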